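/- Suppose ā₁, ā₂ ∈ (ℕ⁺)ⁿ and c̄₁, c̄₂ ∈ (ℕ⁺)^m are tuples such that σ(ā₁) ∩ σ(c̄₁) = ∅ and σ(ā₂) ∩ σ(c̄₂) = ∅. If for every L-formula φ(v₁,…,vₙ) one has ℕ⁺ ⊨ φ(ā₁) ⇔ ℕ⁺ ⊨ φ(ā₂), and for every L-formula ψ(w₁,…,w_m) one has ℕ⁺ ⊨ ψ(c̄₁) ⇔ ℕ⁺ ⊨ ψ(c̄₂), then for every L-formula χ(v₁,…,vₙ,w₁,…,w_m) one has ℕ⁺ ⊨ χ(ā₁, c̄₁) ⇔ ℕ⁺ ⊨ χ(ā₂, c̄₂). -/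

import Mathlib

open FirstOrder Language

/-- The language `L` with one binary function symbol `·` and one constant symbol `1`. -/
def L : FirstOrder.Language :=
  ⟨fun n => match n with | 0 => Unit | 2 => Unit | _ => Empty, fun _ => Empty⟩

/-- Any monoid is an `L`-structure, with `·` interpreted as multiplication and `1` as the
identity. In particular `ℕ+` is the standard model of Skolem arithmetic, and
`Multiplicative ℕ` is the additive `L`-structure `(ℕ, +, 0)`. -/
instance (M : Type*) [Monoid M] : L.Structure M where
  funMap {n} f x :=
    match n, f, x with
    | 0, _, _ => 1
    | 2, _, x => x 0 * x 1
  RelMap r _ := r.elim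

/-- The support of a tuple: the set of primes dividing some component. -/
def PSupp {n : ℕ} (a : Fin n → ℕ+) : Set ℕ := {p | p.Prime ∧ ∃ i, p ∣ (a i : ℕ)}

/-!
A permutation `σ` of the primes induces an automorphism of `(ℕ+, ·, 1)`, and automorphisms
preserve every formula. Write the components of `a₁` as monomials `∏ j, p j ^ E j i` in the
distinct primes `p j` dividing them. The formula "there are distinct primes `x j` with
`vᵢ = ∏ j, x j ^ E j i`" holds of `a₁`, hence of `a₂`, which yields distinct primes `q j`
presenting `a₂` with the same exponents; likewise for `c₁` and `c₂`. Since every `p j` and `q j`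
really occurs, disjointness of supports makes the combined families of primes injective on both
sides, so a single `σ` sends the primes of `(a₁, c₁)` to those of `(a₂, c₂)`, and its
automorphism sends `(a₁, c₁)` to `(a₂, c₂)`.
-/

namespace SkolemArithmetic

open Term

section Terms

variable {α : Type*}

def oneTerm : L.Term α := func (L := L) (l := 0) () ![]

def mulTerm (t s : L.Term α) : L.Term α := func (L := L) (l := 2) () ![t, s]

def listProdTerm : List (L.Term α) → L.Term α
  | [] => oneTerm
  | t :: l => mulTerm t (listProdTerm l)

def powTerm (t : L.Term α) (k : ℕ) : L.Term α := listProdTerm (List.replicate k t)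

variable {M : Type*} [Monoid M] (v : α → M)

@[simp] lemma realize_oneTerm : (oneTerm : L.Term α).realize v = 1 := rfl

@[simp] lemma realize_mulTerm (t s : L.Term α) :
    (mulTerm t s).realize v = t.realize v * s.realize v := rfl

@[simp] lemma realize_listProdTerm (l : List (L.Term α)) :
    (listProdTerm l).realize v = (l.map (Term.realize v)).prod := by
  induction l with
  | nil => rfl
  | cons t l ih => simp [listProdTerm, ih]

@[simp] lemma realize_powTerm (t : L.Term α) (k : ℕ) :
    (powTerm t k).realize v = t.realize v ^ k := by
  simp [powTerm]

end Terms

noncomputable def irreducibleFormula : L.Formula (Fin 1) :=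
  ∼((var 0).equal oneTerm) ⊓
    Formula.iAlls (Fin 2)
      ((mulTerm (var (Sum.inr 0)) (var (Sum.inr 1))).equal (var (Sum.inl 0)) ⟹
        ((var (Sum.inr 0)).equal oneTerm ⊔ (var (Sum.inr 1)).equal oneTerm))

lemma realize_irreducibleFormula {M : Type*} [Monoid M] (x : M) :
    irreducibleFormula.Realize (fun _ => x) ↔ x ≠ 1 ∧ ∀ y z : M, y * z = x → y = 1 ∨ z = 1 := by
  simp only [irreducibleFormula, Formula.realize_inf, Formula.realize_not, Formula.realize_equal,
    Formula.realize_iAlls, Formula.realize_imp, Formula.realize_sup, realize_mulTerm,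
    realize_oneTerm, realize_var, Sum.elim_inl, Sum.elim_inr]
  exact and_congr_right fun _ => ⟨fun h y z => h ![y, z], fun h i => h (i 0) (i 1)⟩

lemma _root_.PNat.prime_iff_forall_mul_eq {x : ℕ+} :
    (x : ℕ).Prime ↔ x ≠ 1 ∧ ∀ y z : ℕ+, y * z = x → y = 1 ∨ z = 1 := by
  refine ⟨fun hx => ⟨PNat.Prime.ne_one hx, fun y z hyz => ?_⟩, fun ⟨hx, h⟩ => ?_⟩
  · rcases (PNat.dvd_prime hx).mp ⟨z, hyz.symm⟩ with hy | rfl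
    · exact .inl hy
    · exact .inr (mul_eq_left.mp hyz)
  refine Nat.prime_def.mpr ⟨(Nat.two_le_iff _).mpr ⟨x.ne_zero, mt PNat.coe_eq_one_iff.mp hx⟩,
    fun m ⟨k, hk⟩ => ?_⟩
  lift m to ℕ+ using Nat.pos_of_mul_pos_right (hk ▸ x.pos)
  lift k to ℕ+ using Nat.pos_of_mul_pos_left (hk ▸ x.pos)
  rcases h m k (PNat.coe_injective (by simp [hk])) with rfl | rfl
  · exact .inl rfl
  · exact .inr (by simp [hk])

section Monomials

variable {κ ι : Type*} [Fintype κ]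

def monomials (p : κ → Nat.Primes) (E : κ → ι → ℕ) (i : ι) : ℕ+ := ∏ j, (p j : ℕ+) ^ E j i

noncomputable def monomialsFormula [Finite ι] (E : κ → ι → ℕ) : L.Formula ι :=
  Formula.iExs κ <|
    (Formula.iInf fun j : κ => irreducibleFormula.relabel fun _ => Sum.inr j) ⊓
    (Formula.iInf fun jk : {jk : κ × κ // jk.1 ≠ jk.2} =>
      ∼((var (Sum.inr jk.1.1)).equal (var (Sum.inr jk.1.2)))) ⊓
    Formula.iInf fun i => (var (Sum.inl i)).equal
      (listProdTerm (Finset.univ.toList.map fun j => powTerm (var (Sum.inr j)) (E j i)))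

lemma realize_monomialsFormula [Finite ι] (E : κ → ι → ℕ) (a : ι → ℕ+) :
    (monomialsFormula E).Realize a ↔
      ∃ p : κ → Nat.Primes, Function.Injective p ∧ monomials p E = a := by
  simp only [monomialsFormula, Formula.realize_iExs, Formula.realize_inf, Formula.realize_iInf,
    Formula.realize_relabel, Formula.realize_not, Formula.realize_equal, realize_var,
    realize_listProdTerm, List.map_map, Function.comp_def, realize_powTerm, Sum.elim_inl,
    Sum.elim_inr, Finset.prod_map_toList, realize_irreducibleFormula,
    ← PNat.prime_iff_forall_mul_eq]
  constructor
  · rintro ⟨x, ⟨hx, hne⟩, ha⟩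
    refine ⟨fun j => ⟨x j, hx j⟩, fun j k hjk => ?_, funext fun i => (ha i).symm⟩
    by_contra h
    have hjk' : (x j : ℕ) = x k := congrArg (fun q : Nat.Primes => (q : ℕ)) hjk
    exact hne ⟨(j, k), h⟩ (PNat.coe_injective hjk')
  · rintro ⟨p, hp, rfl⟩
    refine ⟨fun j => p j, ⟨fun j => (p j).2, fun jk h => ?_⟩, fun i => rfl⟩
    exact jk.2 (hp (Nat.Primes.coe_pnat_injective h))

lemma coe_mem_pSupp_monomials {n : ℕ} (p : κ → Nat.Primes) {E : κ → Fin n → ℕ} {j : κ}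
    {i : Fin n} (hE : E j i ≠ 0) : (p j : ℕ) ∈ PSupp (monomials p E) := by
  refine ⟨(p j).2, i, ?_⟩
  rw [← Nat.Primes.coe_pnat_nat, ← PNat.dvd_iff]
  exact (dvd_pow_self _ hE).trans (Finset.dvd_prod_of_mem _ (Finset.mem_univ j))

lemma injective_sumElim_of_pSupp_disjoint {κ' : Type*} [Fintype κ'] {n m : ℕ}
    {p : κ → Nat.Primes} {s : κ' → Nat.Primes} {E : κ → Fin n → ℕ} {G : κ' → Fin m → ℕ}
    (hp : Function.Injective p) (hs : Function.Injective s)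
    (hE : ∀ j, ∃ i, E j i ≠ 0) (hG : ∀ k, ∃ i, G k i ≠ 0)
    (h : PSupp (monomials p E) ∩ PSupp (monomials s G) = ∅) :
    Function.Injective (Sum.elim p s) := by
  refine hp.sumElim hs fun j k hjk => ?_
  obtain ⟨i, hi⟩ := hE j
  obtain ⟨i', hi'⟩ := hG k
  exact h.subset ⟨coe_mem_pSupp_monomials p hi, hjk ▸ coe_mem_pSupp_monomials s hi'⟩

end Monomials

section Exponents

variable {ι : Type*} [Fintype ι]

def primeSupport (a : ι → ℕ+) : Finset Nat.Primes :=
  Finset.univ.biUnion fun i => Multiset.toFinset (a i).factorMultiset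

def exponents (a : ι → ℕ+) (p : primeSupport a) (i : ι) : ℕ :=
  Multiset.count (p : Nat.Primes) (a i).factorMultiset

lemma monomials_exponents (a : ι → ℕ+) : monomials Subtype.val (exponents a) = a := by
  funext i
  let v : Multiset Nat.Primes := (a i).factorMultiset
  calc ∏ p : primeSupport a, ((p : Nat.Primes) : ℕ+) ^ v.count (p : Nat.Primes)
      = ∏ p ∈ primeSupport a, (p : ℕ+) ^ v.count p :=
        Finset.prod_coe_sort (primeSupport a) fun p : Nat.Primes => (p : ℕ+) ^ v.count p
    _ = ∏ p ∈ v.toFinset, (p : ℕ+) ^ v.count p := by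
      refine (Finset.prod_subset (Finset.subset_biUnion_of_mem _ (Finset.mem_univ i)) ?_).symm
      intro p _ hp
      rw [Multiset.count_eq_zero.mpr (mt Multiset.mem_toFinset.mpr hp), pow_zero]
    _ = (v.map (↑)).prod := (Finset.prod_multiset_map_count v _).symm
    _ = a i := PNat.prod_factorMultiset (a i)

lemma exists_exponents_ne_zero (a : ι → ℕ+) (p : primeSupport a) : ∃ i, exponents a p i ≠ 0 := by
  obtain ⟨i, -, hi⟩ := Finset.mem_biUnion.mp p.2
  exact ⟨i, Multiset.count_ne_zero.mpr (Multiset.mem_toFinset.mp hi)⟩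

lemma exists_injective_monomials_exponents_eq {a b : ι → ℕ+}
    (h : ∀ φ : L.Formula ι, φ.Realize a ↔ φ.Realize b) :
    ∃ p : primeSupport a → Nat.Primes, Function.Injective p ∧ monomials p (exponents a) = b := by
  rw [← realize_monomialsFormula, ← h, realize_monomialsFormula]
  exact ⟨Subtype.val, Subtype.val_injective, monomials_exponents a⟩

end Exponents

section Automorphisms

def _root_.PrimeMultiset.map (f : Nat.Primes → Nat.Primes) : PrimeMultiset →+ PrimeMultiset :=
  Multiset.mapAddMonoidHom f

lemma _root_.PrimeMultiset.map_map (f g : Nat.Primes → Nat.Primes) (v : PrimeMultiset) :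
    PrimeMultiset.map g (PrimeMultiset.map f v) = PrimeMultiset.map (g ∘ f) v :=
  Multiset.map_map g f v

lemma _root_.PrimeMultiset.map_id (v : PrimeMultiset) : PrimeMultiset.map id v = v :=
  Multiset.map_id v

lemma _root_.PrimeMultiset.map_ofPrime (f : Nat.Primes → Nat.Primes) (p : Nat.Primes) :
    PrimeMultiset.map f (PrimeMultiset.ofPrime p) = PrimeMultiset.ofPrime (f p) :=
  Multiset.map_singleton f p

def primePermMulEquiv (σ : Equiv.Perm Nat.Primes) : ℕ+ ≃* ℕ+ where
  toFun x := (PrimeMultiset.map σ x.factorMultiset).prod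
  invFun x := (PrimeMultiset.map σ.symm x.factorMultiset).prod
  left_inv x := by
    dsimp only
    rw [PrimeMultiset.factorMultiset_prod, PrimeMultiset.map_map, σ.symm_comp_self,
      PrimeMultiset.map_id, PNat.prod_factorMultiset]
  right_inv x := by
    dsimp only
    rw [PrimeMultiset.factorMultiset_prod, PrimeMultiset.map_map, σ.self_comp_symm,
      PrimeMultiset.map_id, PNat.prod_factorMultiset]
  map_mul' x y := by
    rw [PNat.factorMultiset_mul, map_add, PrimeMultiset.prod_add]

lemma primePermMulEquiv_apply_coe (σ : Equiv.Perm Nat.Primes) (p : Nat.Primes) :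
    primePermMulEquiv σ p = σ p := by
  change (PrimeMultiset.map σ (p : ℕ+).factorMultiset).prod = _
  rw [PNat.factorMultiset_ofPrime, PrimeMultiset.map_ofPrime, PrimeMultiset.prod_ofPrime]

lemma primePermMulEquiv_comp_monomials {κ ι : Type*} [Fintype κ] (σ : Equiv.Perm Nat.Primes)
    (p : κ → Nat.Primes) (E : κ → ι → ℕ) :
    primePermMulEquiv σ ∘ monomials p E = monomials (σ ∘ p) E := by
  funext i
  simp only [Function.comp_apply, monomials, map_prod, map_pow, primePermMulEquiv_apply_coe]

def _root_.MulEquiv.toLEquiv {M N : Type*} [Monoid M] [Monoid N] (f : M ≃* N) : M ≃[L] N where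
  toEquiv := f.toEquiv
  map_fun' {k} g x :=
    match k, g with
    | 0, _ => map_one f
    | 2, _ => map_mul f (x 0) (x 1)
    | 1, g => Empty.elim g
    | _ + 3, g => Empty.elim g
  map_rel' r := Empty.elim r

end Automorphisms

end SkolemArithmetic

open SkolemArithmetic

/-- Coprime products of pairwise conjugate tuples are conjugate. -/
theorem conjugate_coprime_products (n m : ℕ) (a₁ a₂ : Fin n → ℕ+) (c₁ c₂ : Fin m → ℕ+)
    (h₁ : PSupp a₁ ∩ PSupp c₁ = ∅) (h₂ : PSupp a₂ ∩ PSupp c₂ = ∅)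
    (ha : ∀ φ : L.Formula (Fin n), φ.Realize a₁ ↔ φ.Realize a₂)
    (hc : ∀ ψ : L.Formula (Fin m), ψ.Realize c₁ ↔ ψ.Realize c₂) :
    ∀ χ : L.Formula (Fin n ⊕ Fin m),
      χ.Realize (Sum.elim a₁ c₁) ↔ χ.Realize (Sum.elim a₂ c₂) := by
  obtain ⟨p, hp, ha₂⟩ := exists_injective_monomials_exponents_eq ha
  obtain ⟨s, hs, hc₂⟩ := exists_injective_monomials_exponents_eq hc
  have hinj₁ : Function.Injective (Sum.elim (Subtype.val : primeSupport a₁ → Nat.Primes)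
      (Subtype.val : primeSupport c₁ → Nat.Primes)) :=
    injective_sumElim_of_pSupp_disjoint Subtype.val_injective Subtype.val_injective
      (exists_exponents_ne_zero a₁) (exists_exponents_ne_zero c₁)
      (by rwa [monomials_exponents, monomials_exponents])
  have hinj₂ : Function.Injective (Sum.elim p s) :=
    injective_sumElim_of_pSupp_disjoint hp hs
      (exists_exponents_ne_zero a₁) (exists_exponents_ne_zero c₁) (by rwa [ha₂, hc₂])
  obtain ⟨σ, hσ⟩ := Equiv.Perm.exists_extending_pair _ _ hinj₁ hinj₂
  have hσa : primePermMulEquiv σ ∘ a₁ = a₂ := by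
    rw [← monomials_exponents a₁, primePermMulEquiv_comp_monomials, ← ha₂]
    exact congrArg₂ monomials (funext fun j => hσ (.inl j)) rfl
  have hσc : primePermMulEquiv σ ∘ c₁ = c₂ := by
    rw [← monomials_exponents c₁, primePermMulEquiv_comp_monomials, ← hc₂]
    exact congrArg₂ monomials (funext fun k => hσ (.inr k)) rfl
  intro χ
  rw [← hσa, ← hσc, ← Sum.comp_elim]
  exact (StrongHomClass.realize_formula (primePermMulEquiv σ).toLEquiv χ).symm
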